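/- arXiv:1706.00617 — 2 statements merged into one kernel-verified Lean document; each statement's English description precedes it below -/
import Mathlib

section
/- Let D be a semi-complete digraph, let c be a nonnegative integer, and let π be a vertex ordering of D of width at most c. If u, v ∈ V(D) satisfy π(u) < π(v) − 3c, then there exist c + 1 pairwise arc-disjoint directed paths in D from u to v. -/
open Finset

variable {V : Type*} [Fintype V] [DecidableEq V]

/-- The set of the first `i` vertices in the vertex ordering `π`. -/
def prefixSet (π : V ≃ Fin (Fintype.card V)) (i : ℕ) : Finset V :=
  Finset.univ.filter (fun v => (π v : ℕ) < i)

/-- The set of the last `n - i` vertices in the vertex ordering `π`. -/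
def suffixSet (π : V ≃ Fin (Fintype.card V)) (i : ℕ) : Finset V :=
  Finset.univ.filter (fun v => i ≤ (π v : ℕ))

/-- The cut at position `i`: the arcs from outside the length-`i` prefix into the prefix. -/
def cutFinset (E : V → V → Prop) [DecidableRel E]
    (π : V ≃ Fin (Fintype.card V)) (i : ℕ) : Finset (V × V) :=
  Finset.univ.filter (fun p : V × V => E p.1 p.2 ∧ i ≤ (π p.1 : ℕ) ∧ (π p.2 : ℕ) < i)

/-- The size of the cut at position `i`. -/
def cutSize (E : V → V → Prop) [DecidableRel E]
    (π : V ≃ Fin (Fintype.card V)) (i : ℕ) : ℕ :=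
  (cutFinset E π i).card

/-- The width of a vertex ordering. -/
def widthOf (E : V → V → Prop) [DecidableRel E] (π : V ≃ Fin (Fintype.card V)) : ℕ :=
  (Finset.range (Fintype.card V + 1)).sup (cutSize E π)

/-- The cutwidth of a digraph. -/
noncomputable def cutwidth (E : V → V → Prop) [DecidableRel E] : ℕ :=
  sInf {w | ∃ π : V ≃ Fin (Fintype.card V), widthOf E π = w}

/-- The OLA-cost of a vertex ordering. -/
def olaOf (E : V → V → Prop) [DecidableRel E] (π : V ≃ Fin (Fintype.card V)) : ℕ :=
  ∑ i ∈ Finset.range (Fintype.card V + 1), cutSize E π i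

/-- The OLA-cost of a digraph. -/
noncomputable def ola (E : V → V → Prop) [DecidableRel E] : ℕ :=
  sInf {w | ∃ π : V ≃ Fin (Fintype.card V), olaOf E π = w}

/-- The arcs of a path given as a list of vertices. -/
def pathArcs (l : List V) : List (V × V) := l.zip l.tail

/-- `l` is a directed path (walk) from `u` to `v` in the digraph `E`. -/
def IsPath (E : V → V → Prop) (u v : V) (l : List V) : Prop :=
  l.head? = some u ∧ l.getLast? = some v ∧ List.Chain' E l

/-!
Among the at least `3c + 1` vertices `w` with `π u < π w ≤ π v`, at most `c` lack the arc
`u → w`: by semi-completeness each of them sends an arc to `u` across the cut just after `u`.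
Likewise at most `c` vertices `w ≠ v` lack the arc `w → v`, since `v` sends an arc to each
across the cut at `v`. The remaining `c + 1` vertices `w` give the paths `u w v` (just `u v`
when `w = v`), and two such paths through distinct `w ≠ u` have no arc in common.
-/

def twoArcPath {α : Type*} [DecidableEq α] (u w v : α) : List α :=
  if w = v then [u, v] else [u, w, v]

section TwoArcPath

variable {α : Type*} [DecidableEq α]

theorem isPath_twoArcPath {E : α → α → Prop} {u w v : α} (huw : E u w) (hwv : w = v ∨ E w v) :
    IsPath E u v (twoArcPath u w v) := by
  unfold twoArcPath
  split_ifs with h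
  · subst h
    exact ⟨rfl, rfl, .cons_cons huw (.singleton _)⟩
  · exact ⟨rfl, rfl, .cons_cons huw (.cons_cons (hwv.resolve_left h) (.singleton _))⟩

theorem mem_pathArcs_twoArcPath {u w v : α} {e : α × α}
    (he : e ∈ pathArcs (twoArcPath u w v)) : e = (u, w) ∨ e = (w, v) := by
  unfold twoArcPath at he
  split_ifs at he with h
  · subst h
    simp_all [pathArcs]
  · simpa [pathArcs] using he

theorem not_mem_pathArcs_twoArcPath {u w w' v : α} (hw : w ≠ u) (hw' : w' ≠ u) (hne : w ≠ w')
    {e : α × α} (he : e ∈ pathArcs (twoArcPath u w v)) :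
    e ∉ pathArcs (twoArcPath u w' v) := by
  intro he'
  rcases mem_pathArcs_twoArcPath he with rfl | rfl <;>
    rcases mem_pathArcs_twoArcPath he' with h | h <;>
    simp_all [eq_comm]

end TwoArcPath

section Cuts

variable (E : V → V → Prop) [DecidableRel E] (π : V ≃ Fin (Fintype.card V))

omit [DecidableEq V] in
theorem cutSize_le_widthOf {i : ℕ} (hi : i ≤ Fintype.card V) : cutSize E π i ≤ widthOf E π :=
  le_sup (mem_range.mpr (Nat.lt_succ_of_le hi))

omit [DecidableEq V] in
theorem card_later_adj_to_le_cutSize {x : V} {i : ℕ} (hx : (π x : ℕ) < i) :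
    #{w | i ≤ (π w : ℕ) ∧ E w x} ≤ cutSize E π i :=
  card_le_card_of_injOn (fun w => (w, x)) (fun w hw => by simp_all [cutFinset])
    (fun _ _ _ _ h => congrArg Prod.fst h)

omit [DecidableEq V] in
theorem card_earlier_adj_from_le_cutSize {x : V} {i : ℕ} (hx : i ≤ (π x : ℕ)) :
    #{w | (π w : ℕ) < i ∧ E x w} ≤ cutSize E π i :=
  card_le_card_of_injOn (fun w => (x, w)) (fun w hw => by simp_all [cutFinset])
    (fun _ _ _ _ h => congrArg Prod.snd h)

variable {E}

omit [DecidableEq V] in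
theorem card_later_not_adj_from_le_widthOf (hsc : ∀ u v : V, u ≠ v → E u v ∨ E v u) (u : V) :
    #{w | (π u : ℕ) < π w ∧ ¬E u w} ≤ widthOf E π :=
  calc #{w | (π u : ℕ) < π w ∧ ¬E u w}
      _ ≤ #{w | (π u : ℕ) + 1 ≤ π w ∧ E w u} := by
        refine card_le_card fun w hw => ?_
        simp only [mem_filter, mem_univ, true_and] at hw ⊢
        have hne : u ≠ w := by rintro rfl; exact lt_irrefl _ hw.1
        exact ⟨hw.1, (hsc u w hne).resolve_left hw.2⟩
      _ ≤ cutSize E π (π u + 1) := card_later_adj_to_le_cutSize E π (Nat.lt_succ_self _)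
      _ ≤ widthOf E π := cutSize_le_widthOf E π (π u).isLt

omit [DecidableEq V] in
theorem card_earlier_not_adj_to_le_widthOf (hsc : ∀ u v : V, u ≠ v → E u v ∨ E v u) (v : V) :
    #{w | (π w : ℕ) < π v ∧ ¬E w v} ≤ widthOf E π :=
  calc #{w | (π w : ℕ) < π v ∧ ¬E w v}
      _ ≤ #{w | (π w : ℕ) < π v ∧ E v w} := by
        refine card_le_card fun w hw => ?_
        simp only [mem_filter, mem_univ, true_and] at hw ⊢
        have hne : w ≠ v := by rintro rfl; exact lt_irrefl _ hw.1
        exact ⟨hw.1, (hsc w v hne).resolve_left hw.2⟩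
      _ ≤ cutSize E π (π v) := card_earlier_adj_from_le_cutSize E π le_rfl
      _ ≤ widthOf E π := cutSize_le_widthOf E π (π v).isLt.le

end Cuts

omit [DecidableEq V] in
theorem card_filter_val_mem_Ioc (π : V ≃ Fin (Fintype.card V)) {a b : ℕ}
    (hb : b < Fintype.card V) : #{w | a < (π w : ℕ) ∧ (π w : ℕ) ≤ b} = b - a := by
  rw [← Nat.card_Ioc]
  refine card_nbij (fun w => (π w : ℕ)) (fun w hw => by simpa using hw)
    (fun w₁ _ w₂ _ h => π.injective (Fin.ext h)) fun k hk => ?_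
  have hk' := mem_Ioc.mp hk
  exact ⟨π.symm ⟨k, by omega⟩, by simpa using hk', by simp⟩

theorem succ_le_card_middles_of_far_apart {E : V → V → Prop} [DecidableRel E]
    (hsc : ∀ u v : V, u ≠ v → E u v ∨ E v u) {c : ℕ} {π : V ≃ Fin (Fintype.card V)}
    (hw : widthOf E π ≤ c) {u v : V} (hfar : (π u : ℕ) + 3 * c < π v) :
    c + 1 ≤ #{w | (π u : ℕ) < π w ∧ (π w : ℕ) ≤ π v ∧ E u w ∧ (w = v ∨ E w v)} := by
  set good : Finset V := {w | (π u : ℕ) < π w ∧ (π w : ℕ) ≤ π v ∧ E u w ∧ (w = v ∨ E w v)}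
  set noArcFromU : Finset V := {w | (π u : ℕ) < π w ∧ ¬E u w}
  set noArcToV : Finset V := {w | (π w : ℕ) < π v ∧ ¬E w v}
  have hwindow := card_filter_val_mem_Ioc π (a := π u) (π v).isLt
  have hcover : #{w | (π u : ℕ) < π w ∧ (π w : ℕ) ≤ π v} ≤ #(good ∪ noArcFromU ∪ noArcToV) := by
    refine card_le_card fun w hw => ?_
    simp only [good, noArcFromU, noArcToV, mem_union, mem_filter, mem_univ, true_and] at hw ⊢
    by_cases huw : E u w
    · by_cases hwv : w = v ∨ E w v
      · exact .inl (.inl ⟨hw.1, hw.2, huw, hwv⟩)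
      · push Not at hwv
        exact .inr ⟨lt_of_le_of_ne hw.2 fun h => hwv.1 (π.injective (Fin.ext h)), hwv.2⟩
    · exact .inl (.inr ⟨hw.1, huw⟩)
  have := card_union_le (good ∪ noArcFromU) noArcToV
  have := card_union_le good noArcFromU
  have : #noArcFromU ≤ widthOf E π := card_later_not_adj_from_le_widthOf π hsc u
  have : #noArcToV ≤ widthOf E π := card_earlier_not_adj_to_le_widthOf π hsc v
  omega

theorem arc_disjoint_paths_of_far_apart_general (E : V → V → Prop) [DecidableRel E]
    (hsc : ∀ u v : V, u ≠ v → E u v ∨ E v u)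
    (c : ℕ) (π : V ≃ Fin (Fintype.card V)) (hw : widthOf E π ≤ c)
    (u v : V) (hfar : (π u : ℕ) + 3 * c < (π v : ℕ)) :
    ∃ P : Fin (c + 1) → List V,
      (∀ i, IsPath E u v (P i)) ∧
      (∀ i j, i ≠ j → ∀ e : V × V, e ∈ pathArcs (P i) → e ∉ pathArcs (P j)) := by
  set S : Finset V := {w | (π u : ℕ) < π w ∧ (π w : ℕ) ≤ π v ∧ E u w ∧ (w = v ∨ E w v)}
  have hS : c + 1 ≤ #S := succ_le_card_middles_of_far_apart hsc hw hfar
  let f : Fin (c + 1) ↪ V :=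
    (Fin.castLEEmb hS).trans (S.equivFin.symm.toEmbedding.trans (.subtype _))
  have hf : ∀ i, (π u : ℕ) < π (f i) ∧ (π (f i) : ℕ) ≤ π v ∧ E u (f i) ∧ (f i = v ∨ E (f i) v) :=
    fun i => (mem_filter.mp (S.equivFin.symm (Fin.castLE hS i)).2).2
  have hfu : ∀ i, f i ≠ u := fun i h => by simpa [h] using (hf i).1
  refine ⟨fun i => twoArcPath u (f i) v, fun i => isPath_twoArcPath (hf i).2.2.1 (hf i).2.2.2,
    fun i j hij e => not_mem_pathArcs_twoArcPath (hfu i) (hfu j) (f.injective.ne hij)⟩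

/-- In a semi-complete digraph with an ordering of width at most `c`,
if `u` is more than `3c` positions before `v`, then there are `c + 1` pairwise
arc-disjoint directed paths from `u` to `v`. -/
theorem arc_disjoint_paths_of_far_apart (E : V → V → Prop) [DecidableRel E]
    (hirr : ∀ w : V, ¬ E w w)
    (hsc : ∀ u v : V, u ≠ v → E u v ∨ E v u)
    (c : ℕ) (π : V ≃ Fin (Fintype.card V)) (hw : widthOf E π ≤ c)
    (u v : V) (hfar : (π u : ℕ) + 3 * c < (π v : ℕ)) :
    ∃ P : Fin (c + 1) → List V,
      (∀ i, IsPath E u v (P i)) ∧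
      (∀ i j, i ≠ j → ∀ e : V × V, e ∈ pathArcs (P i) → e ∉ pathArcs (P j)) :=
  arc_disjoint_paths_of_far_apart_general E hsc c π hw u v hfar
end

section
/- Let t ≥ 1 and 0 ≤ x < t be integers, and let C_{t,x} be the circular tournament on vertices v_1, …, v_{2t+1}. Then the ordering (v_1, v_2, …, v_{2t+1}) is a sorted ordering of C_{t,x} (vertices appear in non-decreasing order of in-degree), and ctw(C_{t,x}) = t(t+1)/2 − x. -/
open Finset

variable {V : Type*} [Fintype V] [DecidableEq V]

/-- The in-degree of a vertex. -/
def inDeg (E : V → V → Prop) [DecidableRel E] (u : V) : ℕ :=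
  (Finset.univ.filter (fun v => E v u)).card

/-- The arc relation of the circular tournament `C_{t,x}` on vertices `v_1, …, v_{2t+1}`,
where the vertex `v_i` is represented by the index `i - 1 : Fin (2t+1)`.
For `1 ≤ i < j ≤ 2t+1`: if `j ≤ 2t` then `(v_i, v_j)` is an arc iff `j − i ≤ t`
(otherwise `(v_j, v_i)` is an arc); if `j = 2t+1` then `(v_i, v_j)` is an arc iff
`i ≤ x` or `j − i ≤ t` (otherwise `(v_j, v_i)` is an arc). -/
def circArc (t x : ℕ) (a b : Fin (2 * t + 1)) : Prop :=
  ((a : ℕ) < (b : ℕ) ∧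
    (((b : ℕ) + 1 ≤ 2 * t ∧ (b : ℕ) - (a : ℕ) ≤ t) ∨
     ((b : ℕ) + 1 = 2 * t + 1 ∧ ((a : ℕ) + 1 ≤ x ∨ (b : ℕ) - (a : ℕ) ≤ t)))) ∨
  ((b : ℕ) < (a : ℕ) ∧
    (((a : ℕ) + 1 ≤ 2 * t ∧ ¬ ((a : ℕ) - (b : ℕ) ≤ t)) ∨
     ((a : ℕ) + 1 = 2 * t + 1 ∧ ¬ (((b : ℕ) + 1 ≤ x) ∨ (a : ℕ) - (b : ℕ) ≤ t))))

instance circArc.decidableRel (t x : ℕ) : DecidableRel (circArc t x) := fun a b => by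
  unfold circArc; infer_instance

open Finset
section
/-- ℕ-level version of `circArc`. -/
def circN (t x a b : ℕ) : Prop :=
  (a < b ∧ ((b + 1 ≤ 2*t ∧ b - a ≤ t) ∨ (b + 1 = 2*t + 1 ∧ (a + 1 ≤ x ∨ b - a ≤ t)))) ∨
  (b < a ∧ ((a + 1 ≤ 2*t ∧ ¬ (a - b ≤ t)) ∨ (a + 1 = 2*t + 1 ∧ ¬ ((b + 1 ≤ x) ∨ a - b ≤ t))))

instance circN.dec (t x : ℕ) : ∀ a b, Decidable (circN t x a b) := fun a b => by
  unfold circN; infer_instance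

lemma card_filter_val {n : ℕ} (Q : ℕ → Prop) [DecidablePred Q] :
    ((univ : Finset (Fin n)).filter (fun v : Fin n => Q (v : ℕ))).card
      = ((range n).filter Q).card := by
  refine Finset.card_bij (fun (v : Fin n) (_ : v ∈ (univ : Finset (Fin n)).filter (fun v : Fin n => Q (v : ℕ))) => (v : ℕ)) ?_ ?_ ?_
  · intro a ha
    simp only [mem_filter, mem_univ, true_and] at ha
    simp only [mem_filter, mem_range]
    exact ⟨a.isLt, ha⟩
  · intro a _ b _ h
    exact Fin.val_injective h
  · intro b hb
    simp only [mem_filter, mem_range] at hb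
    exact ⟨⟨b, hb.1⟩, by simp [hb.2], rfl⟩

lemma filter_card_two (n a1 b1 a2 b2 : ℕ) (Q : ℕ → Prop) [DecidablePred Q]
    (h12 : b1 ≤ a2) (hb1 : b1 ≤ n) (hb2 : b2 ≤ n)
    (hQ : ∀ i < n, (Q i ↔ (a1 ≤ i ∧ i < b1) ∨ (a2 ≤ i ∧ i < b2))) :
    ((range n).filter Q).card = (b1 - a1) + (b2 - a2) := by
  have h : (range n).filter Q = Ico a1 b1 ∪ Ico a2 b2 := by
    ext i
    simp only [mem_filter, mem_range, mem_union, mem_Ico]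
    constructor
    · rintro ⟨hi, hQi⟩; exact (hQ i hi).1 hQi
    · intro h
      have hi : i < n := by omega
      exact ⟨hi, (hQ i hi).2 h⟩
  rw [h, card_union_of_disjoint, Nat.card_Ico, Nat.card_Ico]
  rw [Finset.disjoint_left]
  intro i h1 h2
  simp only [mem_Ico] at h1 h2
  omega

/-- The in-degree pattern of the circular tournament. -/
def gdeg (t x j : ℕ) : ℕ := if j < x then t - 1 else if j < 2*t then t else t + x

lemma inDeg_circ (t x : ℕ) (ht : 1 ≤ t) (hx : x < t) (u : Fin (2*t+1)) :
    inDeg (circArc t x) u = gdeg t x (u : ℕ) := by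
  have hu := u.isLt
  have h1 : inDeg (circArc t x) u
      = ((range (2*t+1)).filter (fun i => circN t x i (u:ℕ))).card := by
    rw [inDeg, ← card_filter_val (fun i => circN t x i (u:ℕ))]
    congr 1
  rw [h1, gdeg]
  by_cases hc1 : (u:ℕ) < x
  · rw [if_pos hc1,
      filter_card_two (2*t+1) 0 (u:ℕ) ((u:ℕ)+t+1) (2*t) _ (by omega) (by omega) (by omega)
        (by intro i hi; unfold circN; omega)]
    omega
  · rw [if_neg hc1]
    by_cases hc2 : (u:ℕ) < t
    · rw [if_pos (by omega),
        filter_card_two (2*t+1) 0 (u:ℕ) ((u:ℕ)+t+1) (2*t+1) _ (by omega) (by omega) (by omega)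
          (by intro i hi; unfold circN; omega)]
      omega
    · by_cases hc3 : (u:ℕ) < 2*t
      · rw [if_pos hc3,
          filter_card_two (2*t+1) 0 0 ((u:ℕ)-t) (u:ℕ) _ (by omega) (by omega) (by omega)
            (by intro i hi; unfold circN; omega)]
        omega
      · rw [if_neg hc3]
        have hu2 : (u:ℕ) = 2*t := by omega
        rw [filter_card_two (2*t+1) 0 x t (2*t) _ (by omega) (by omega) (by omega)
            (by intro i hi; unfold circN; omega)]
        omega
end
section
open Finset
lemma sum_gdeg (t x : ℕ) (ht : 1 ≤ t) (hx : x < t) :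
    ∀ s, s ≤ 2*t+1 →
      (∑ j ∈ range s, gdeg t x j) + min s x = s * t + (if s = 2*t+1 then x else 0) := by
  intro s
  induction s with
  | zero =>
    intro _
    rw [if_neg (by omega)]
    simp
  | succ m ih =>
    intro hm
    have ih' := ih (by omega)
    rw [Finset.sum_range_succ]
    have h1 : (m+1)*t = m*t + t := by ring
    rw [h1]
    generalize hA : (∑ j ∈ range m, gdeg t x j) = A at ih' ⊢
    unfold gdeg
    generalize m * t = P at ih' ⊢
    split_ifs at ih' ⊢ <;> omega

variable {V : Type*} [Fintype V] [DecidableEq V]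

lemma prefix_card (π : V ≃ Fin (Fintype.card V)) (i : ℕ) :
    (prefixSet π i).card = min i (Fintype.card V) := by
  have h1 : (prefixSet π i).card
      = ((univ : Finset (Fin (Fintype.card V))).filter
          (fun j : Fin (Fintype.card V) => (j:ℕ) < i)).card := by
    refine Finset.card_bij (fun v (_ : v ∈ prefixSet π i) => π v) ?_ ?_ ?_
    · intro a ha
      simp only [prefixSet, mem_filter, mem_univ, true_and] at ha ⊢
      exact ha
    · intro a _ b _ h; exact π.injective h
    · intro b hb
      simp only [mem_filter, mem_univ, true_and] at hb
      exact ⟨π.symm b, by simp [prefixSet, hb], by simp⟩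
  rw [h1, card_filter_val (fun j => j < i)]
  have h2 : (range (Fintype.card V)).filter (fun j => j < i)
      = range (min i (Fintype.card V)) := by
    ext j; simp only [mem_filter, mem_range, Nat.lt_min]; omega
  rw [h2, card_range]

lemma cut_master (E : V → V → Prop) [DecidableRel E]
    (hE : ∀ a b : V, a ≠ b → (E a b ↔ ¬ E b a)) (hirr : ∀ a : V, ¬ E a a)
    (π : V ≃ Fin (Fintype.card V)) (i : ℕ) :
    2 * cutSize E π i
      + ((prefixSet π i).card * (prefixSet π i).card - (prefixSet π i).card)
      = 2 * ∑ v ∈ prefixSet π i, inDeg E v := by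
  classical
  have hT : ((univ : Finset (V × V)).filter
      (fun p => E p.1 p.2 ∧ ((π p.2 : ℕ) < i))).card = ∑ v ∈ prefixSet π i, inDeg E v := by
    rw [Finset.card_filter, Fintype.sum_prod_type, Finset.sum_comm]
    have hinner : ∀ w : V,
        (∑ u : V, if E u w ∧ ((π w : ℕ) < i) then 1 else 0)
          = if ((π w : ℕ) < i) then inDeg E w else 0 := by
      intro w
      by_cases hw : ((π w : ℕ) < i)
      · simp only [hw, and_true, if_true, inDeg, Finset.card_filter]
      · simp [hw]
    rw [Finset.sum_congr rfl (fun w _ => hinner w), ← Finset.sum_filter]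
    rfl
  have e1 : cutFinset E π i
      = ((univ : Finset (V × V)).filter (fun p => E p.1 p.2 ∧ ((π p.2 : ℕ) < i))).filter
          (fun p => i ≤ (π p.1 : ℕ)) := by
    ext p
    simp only [cutFinset, mem_filter, mem_univ, true_and]
    tauto
  have e2 : ((univ : Finset (V × V)).filter
        (fun p => E p.1 p.2 ∧ ((π p.1 : ℕ) < i) ∧ ((π p.2 : ℕ) < i)))
      = ((univ : Finset (V × V)).filter (fun p => E p.1 p.2 ∧ ((π p.2 : ℕ) < i))).filter
          (fun p => ¬ i ≤ (π p.1 : ℕ)) := by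
    ext p
    simp only [mem_filter, mem_univ, true_and, not_le]
    tauto
  have hsplit : cutSize E π i
      + ((univ : Finset (V × V)).filter
          (fun p => E p.1 p.2 ∧ ((π p.1 : ℕ) < i) ∧ ((π p.2 : ℕ) < i))).card
      = ((univ : Finset (V × V)).filter
          (fun p => E p.1 p.2 ∧ ((π p.2 : ℕ) < i))).card := by
    rw [cutSize, e1, e2]
    exact Finset.card_filter_add_card_filter_not _
  set B := (univ : Finset (V × V)).filter
      (fun p => E p.1 p.2 ∧ ((π p.1 : ℕ) < i) ∧ ((π p.2 : ℕ) < i)) with hB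
  set B' := (univ : Finset (V × V)).filter
      (fun p => E p.2 p.1 ∧ ((π p.1 : ℕ) < i) ∧ ((π p.2 : ℕ) < i)) with hB'
  have hBB' : B.card = B'.card := by
    refine Finset.card_bij (fun p (_ : p ∈ B) => (p.2, p.1)) ?_ ?_ ?_
    · intro p hp
      simp only [hB, hB', mem_filter, mem_univ, true_and] at hp ⊢
      tauto
    · intro p _ q _ h
      simpa [Prod.ext_iff, and_comm] using h
    · intro p hp
      simp only [hB, hB', mem_filter, mem_univ, true_and] at hp
      exact ⟨(p.2, p.1), by simp only [hB, mem_filter, mem_univ, true_and]; tauto, rfl⟩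
  have hdisj : Disjoint B B' := by
    rw [Finset.disjoint_left]
    intro p hp hp'
    simp only [hB, hB', mem_filter, mem_univ, true_and] at hp hp'
    obtain ⟨hp1, hp2, hp3⟩ := hp
    have hne : p.1 ≠ p.2 := fun h => hirr p.2 (by rw [h] at hp1; exact hp1)
    exact ((hE p.1 p.2 hne).1 hp1) hp'.1
  have hunion : B ∪ B' = (prefixSet π i).offDiag := by
    ext p
    simp only [hB, hB', mem_union, mem_filter, mem_univ, true_and, Finset.mem_offDiag,
      prefixSet]
    constructor
    · rintro (⟨h, h1, h2⟩ | ⟨h, h1, h2⟩)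
      · exact ⟨h1, h2, fun hh => hirr p.2 (by rw [hh] at h; exact h)⟩
      · exact ⟨h1, h2, fun hh => hirr p.2 (by rw [hh] at h; exact h)⟩
    · rintro ⟨h1, h2, hne⟩
      by_cases hEp : E p.1 p.2
      · exact Or.inl ⟨hEp, h1, h2⟩
      · exact Or.inr ⟨((hE p.2 p.1 (Ne.symm hne)).2 hEp), h1, h2⟩
  have hcard : B.card + B'.card = (prefixSet π i).card * (prefixSet π i).card
      - (prefixSet π i).card := by
    rw [← card_union_of_disjoint hdisj, hunion, Finset.offDiag_card]
  omega
end
section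
open Finset
lemma le_sq (n : ℕ) : n ≤ n * n := by
  rcases Nat.eq_zero_or_pos n with h | h
  · simp [h]
  · exact Nat.le_mul_of_pos_left n h

lemma sum_indeg_lb (t x : ℕ) (ht : 1 ≤ t) (hx : x < t) (S : Finset (Fin (2*t+1))) :
    S.card * t ≤ (∑ v ∈ S, inDeg (circArc t x) v) + x := by
  have h1 : ∀ v ∈ S, t ≤ inDeg (circArc t x) v + (if (v:ℕ) < x then 1 else 0) := by
    intro v _
    rw [inDeg_circ t x ht hx v]
    unfold gdeg
    split_ifs <;> omega
  have h3 : (∑ v ∈ S, (if (v:ℕ) < x then 1 else 0)) ≤ x := by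
    rw [← Finset.card_filter]
    calc (S.filter (fun v : Fin (2*t+1) => (v:ℕ) < x)).card
        ≤ ((univ : Finset (Fin (2*t+1))).filter (fun v : Fin (2*t+1) => (v:ℕ) < x)).card :=
          Finset.card_le_card (Finset.filter_subset_filter _ (Finset.subset_univ S))
      _ = ((range (2*t+1)).filter (fun j => j < x)).card := card_filter_val (fun j => j < x)
      _ ≤ (range x).card := Finset.card_le_card
          (by intro j hj; simp only [mem_filter, mem_range] at hj ⊢; omega)
      _ = x := card_range x
  calc S.card * t = ∑ _v ∈ S, t := by rw [Finset.sum_const, smul_eq_mul, mul_comm]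
    _ ≤ ∑ v ∈ S, (inDeg (circArc t x) v + if (v:ℕ) < x then 1 else 0) := Finset.sum_le_sum h1
    _ = (∑ v ∈ S, inDeg (circArc t x) v) + ∑ v ∈ S, (if (v:ℕ) < x then 1 else 0) :=
        Finset.sum_add_distrib
    _ ≤ (∑ v ∈ S, inDeg (circArc t x) v) + x := by omega
end

open Finset in
/-- For integers `t ≥ 1` and `0 ≤ x < t`, the natural ordering
`(v_1, …, v_{2t+1})` of the circular tournament `C_{t,x}` is sorted (vertices appear in
non-decreasing order of in-degree, i.e. a vertex of strictly smaller in-degree appears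
earlier), and `ctw(C_{t,x}) = t(t+1)/2 − x`. -/
theorem circular_tournament_cutwidth (t x : ℕ) (ht : 1 ≤ t) (hx : x < t) :
    (∀ a b : Fin (2 * t + 1),
      inDeg (circArc t x) a < inDeg (circArc t x) b → a < b) ∧
    cutwidth (circArc t x) = t * (t + 1) / 2 - x := by
  have hn : Fintype.card (Fin (2*t+1)) = 2*t+1 := Fintype.card_fin _
  have hirr : ∀ a : Fin (2*t+1), ¬ circArc t x a a := by
    intro a h; unfold circArc at h; omega
  have htour : ∀ a b : Fin (2*t+1), a ≠ b → (circArc t x a b ↔ ¬ circArc t x b a) := by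
    intro a b hne
    have h1 := a.isLt; have h2 := b.isLt
    have h3 : (a:ℕ) ≠ (b:ℕ) := fun h => hne (Fin.val_injective h)
    unfold circArc; omega
  constructor
  · intro a b hab
    rw [inDeg_circ t x ht hx a, inDeg_circ t x ht hx b] at hab
    have h1 := a.isLt; have h2 := b.isLt
    rw [Fin.lt_def]
    unfold gdeg at hab
    split_ifs at hab <;> omega
  -- the cutwidth computation
  set D := t*(t+1)/2 with hDdef
  have hD : 2*D = t*t + t := by
    rw [hDdef, Nat.mul_div_cancel' ((Nat.even_mul_succ_self t).two_dvd)]; ring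
  set π0 : Fin (2*t+1) ≃ Fin (Fintype.card (Fin (2*t+1))) := finCongr hn.symm with hπ0def
  have hπ0 : ∀ v : Fin (2*t+1), (π0 v : ℕ) = (v:ℕ) := fun v => rfl
  have hsum : ∀ i : ℕ, ∑ v ∈ prefixSet π0 i, inDeg (circArc t x) v
      = ∑ j ∈ range (min i (2*t+1)), gdeg t x j := by
    intro i
    calc ∑ v ∈ prefixSet π0 i, inDeg (circArc t x) v
        = ∑ v : Fin (2*t+1), (if ((π0 v : ℕ) < i) then inDeg (circArc t x) v else 0) := by
          unfold prefixSet; exact Finset.sum_filter _ _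
      _ = ∑ v : Fin (2*t+1), (if ((v:ℕ) < i) then gdeg t x (v:ℕ) else 0) := by
          refine Finset.sum_congr rfl (fun v _ => ?_)
          rw [hπ0, inDeg_circ t x ht hx]
      _ = ∑ j ∈ range (2*t+1), (if j < i then gdeg t x j else 0) :=
          Fin.sum_univ_eq_sum_range (fun j => if j < i then gdeg t x j else 0) (2*t+1)
      _ = ∑ j ∈ (range (2*t+1)).filter (fun j => j < i), gdeg t x j :=
          (Finset.sum_filter _ _).symm
      _ = ∑ j ∈ range (min i (2*t+1)), gdeg t x j := by
          congr 1
          ext j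
          simp only [mem_filter, mem_range, Nat.lt_min]
          omega
  have hupper : ∀ i : ℕ, cutSize (circArc t x) π0 i ≤ D - x := by
    intro i
    have hm := cut_master (circArc t x) htour hirr π0 i
    have hpc : (prefixSet π0 i).card = min i (2*t+1) := by rw [prefix_card, hn]
    rw [hsum i, hpc] at hm
    set s := min i (2*t+1) with hs
    have hsle : s ≤ 2*t+1 := by omega
    have hG := sum_gdeg t x ht hx s hsle
    set A := ∑ j ∈ range s, gdeg t x j with hA
    obtain ⟨k, hk⟩ := Nat.exists_eq_add_of_le (le_sq s)
    rw [hk] at hm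
    rcases le_or_gt s t with hst | hst
    · obtain ⟨d, hd⟩ : ∃ d, t = s + d := ⟨t - s, by omega⟩
      have e1 : t*t = s*s + 2*(s*d) + d*d := by rw [hd]; ring
      have e2 : s*t = s*s + s*d := by rw [hd]; ring
      have e3 : d ≤ d*d := le_sq d
      rw [if_neg (by omega)] at hG
      rw [hk] at e1 e2
      omega
    · obtain ⟨d, hd⟩ : ∃ d, s = t + d := ⟨s - t, by omega⟩
      have e1 : s*s = t*t + 2*(t*d) + d*d := by rw [hd]; ring
      have e2 : s*t = t*t + t*d := by rw [hd]; ring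
      have e3 : d ≤ d*d := le_sq d
      rw [hk] at e1
      by_cases hs2 : s = 2*t+1
      · rw [if_pos hs2] at hG
        have e4 : d = t+1 := by omega
        have e5 : t*d = t*t + t := by rw [e4]; ring
        have e6 : d*d = t*t + 2*t + 1 := by rw [e4]; ring
        omega
      · rw [if_neg hs2] at hG
        omega
  have hlower : ∀ π : Fin (2*t+1) ≃ Fin (Fintype.card (Fin (2*t+1))),
      D - x ≤ widthOf (circArc t x) π := by
    intro π
    have hmem : t ∈ range (Fintype.card (Fin (2*t+1)) + 1) := by
      rw [hn, mem_range]; omega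
    unfold widthOf
    refine le_trans ?_ (Finset.le_sup (f := cutSize (circArc t x) π) hmem)
    have hm := cut_master (circArc t x) htour hirr π t
    have hpc : (prefixSet π t).card = t := by rw [prefix_card, hn]; omega
    have hlb := sum_indeg_lb t x ht hx (prefixSet π t)
    rw [hpc] at hm hlb
    obtain ⟨k, hk⟩ := Nat.exists_eq_add_of_le (le_sq t)
    rw [hk] at hm hlb
    omega
  refine le_antisymm ?_ ?_
  · refine le_trans (Nat.sInf_le ⟨π0, rfl⟩) ?_
    unfold widthOf
    exact Finset.sup_le (fun i _ => hupper i)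
  · refine le_csInf ⟨_, π0, rfl⟩ ?_
    rintro w ⟨π, rfl⟩
    exact hlower π
end
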